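/- arXiv:1702.05752 — 3 statements merged into one kernel-verified Lean document; each statement's English description precedes it below -/
import Mathlib

section
/- Let (S_⊥, M) be a C-monoid and θ a maximal proper congruence on the C-algebra M. Then for every q ∈ S_⊥, (q ∘ T, F) ∉ θ. -/
/-- A `C`-monoid: a monoid with zero `S`, a `C`-algebra `M` with `T, F, U`,
a `C`-set action, and a composition `∘ : S × M → M` satisfying the nine axioms. -/
structure CMonoid (S M : Type*) where
  one : S
  bot : S
  mul : S → S → S
  mul_assoc : ∀ a b c, mul (mul a b) c = mul a (mul b c)
  one_mul : ∀ a, mul one a = a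
  mul_one : ∀ a, mul a one = a
  bot_mul : ∀ a, mul bot a = bot
  mul_bot : ∀ a, mul a bot = bot
  tt : M
  ff : M
  uu : M
  or : M → M → M
  and : M → M → M
  neg : M → M
  negneg : ∀ a, neg (neg a) = a
  demorgan : ∀ a b, neg (and a b) = or (neg a) (neg b)
  andAssoc : ∀ a b c, and (and a b) c = and a (and b c)
  distrib : ∀ a b c, and a (or b c) = or (and a b) (and a c)
  orAnd : ∀ a b c, and (or a b) c = or (and a c) (and (neg a) (and b c))
  absorb : ∀ a b, or a (and a b) = a
  quasiComm : ∀ a b, or (and a b) (and b a) = or (and b a) (and a b)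
  t_and : ∀ a, and tt a = a
  and_t : ∀ a, and a tt = a
  f_or : ∀ a, or ff a = a
  or_f : ∀ a, or a ff = a
  f_and : ∀ a, and ff a = ff
  u_and : ∀ a, and uu a = uu
  u_or : ∀ a, or uu a = uu
  neg_t : neg tt = ff
  neg_u : neg uu = uu
  act : M → S → S → S
  u_act : ∀ s t, act uu s t = bot
  f_act : ∀ s t, act ff s t = t
  neg_act : ∀ a s t, act (neg a) s t = act a t s
  pos_red : ∀ a s t u, act a (act a s t) u = act a s u
  neg_red : ∀ a s t u, act a s (act a t u) = act a s u
  and_act : ∀ a b s t, act (and a b) s t = act a (act b s t) t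
  premise_interchange : ∀ a b s t u v,
    act a (act b s t) (act b u v) = act b (act a s u) (act a t v)
  and_compat : ∀ a b s t, act a s t = act a t t → act (and a b) s t = act (and a b) t t
  circ : S → M → M
  bot_circ : ∀ a, circ bot a = uu
  circ_u : ∀ s, circ s uu = uu
  one_circ : ∀ a, circ one a = a
  circ_neg : ∀ s a, circ s (neg a) = neg (circ s a)
  circ_and : ∀ s a b, circ s (and a b) = and (circ s a) (circ s b)
  mul_circ : ∀ s t a, circ (mul s t) a = circ s (circ t a)
  act_mul : ∀ a s t u, mul (act a s t) u = act a (mul s u) (mul t u)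
  mul_act : ∀ a r s t, mul r (act a s t) = act (circ r a) (mul r s) (mul r t)
  act_circ : ∀ a b s t,
    circ (act a s t) b = or (and a (circ s b)) (and (neg a) (circ t b))

/-- A congruence on the `C`-algebra part of a `C`-monoid. -/
structure Cong {S M : Type*} (C : CMonoid S M) where
  r : M → M → Prop
  refl : ∀ a, r a a
  symm : ∀ {a b}, r a b → r b a
  trans : ∀ {a b c}, r a b → r b c → r a c
  or_compat : ∀ {a b c d}, r a b → r c d → r (C.or a c) (C.or b d)
  and_compat : ∀ {a b c d}, r a b → r c d → r (C.and a c) (C.and b d)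
  neg_compat : ∀ {a b}, r a b → r (C.neg a) (C.neg b)

/-- For a maximal proper congruence `θ` on `M`, `(q ∘ T, F) ∉ θ` for every `q`. -/
theorem stmt12 {S M : Type*} (C : CMonoid S M) (θ : Cong C)
    (hproper : ¬ ∀ a b, θ.r a b)
    (hmax : ∀ θ' : Cong C, (∀ a b, θ.r a b → θ'.r a b) →
      (∀ a b, θ'.r a b → θ.r a b) ∨ (∀ a b, θ'.r a b)) :
    ∀ q : S, ¬ θ.r (C.circ q C.tt) C.ff := by
  intro q h
  apply hproper
  -- neg F = T
  have negf : C.neg C.ff = C.tt := by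
    have := C.negneg C.tt
    rw [C.neg_t] at this
    exact this
  -- circ distributes over or
  have orneg : ∀ a b : M, C.or a b = C.neg (C.and (C.neg a) (C.neg b)) := by
    intro a b
    rw [C.demorgan, C.negneg, C.negneg]
  have circ_or : ∀ a b : M, C.circ q (C.or a b) = C.or (C.circ q a) (C.circ q b) := by
    intro a b
    rw [orneg a b, C.circ_neg, C.circ_and, C.circ_neg, C.circ_neg, C.demorgan,
      C.negneg, C.negneg]
  -- from h : θ.r (circ q T) F get θ.r (circ q F) T
  have h2 : θ.r (C.circ q C.ff) C.tt := by
    have := θ.neg_compat h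
    rw [← C.circ_neg, C.neg_t, negf] at this
    exact this
  -- combine
  have h3 : θ.r (C.circ q C.tt) C.tt := by
    have := θ.or_compat h2 h
    rw [← circ_or, C.f_or, C.or_f] at this
    exact this
  have hTF : θ.r C.tt C.ff := θ.trans (θ.symm h3) h
  have hall : ∀ a : M, θ.r a C.ff := by
    intro a
    have := θ.and_compat hTF (θ.refl a)
    rw [C.t_and, C.f_and] at this
    exact this
  intro a b
  exact θ.trans (hall a) (θ.symm (hall b))
end

section
/- Let (S_⊥, M) be a C-monoid, θ a maximal proper congruence on M, and E_θ = { (s,t) : β[s,t] = β[t,t] for some β with (β,T) ∈ θ }. Then for all s, t ∈ S_⊥ and α ∈ M: if (s, t) ∈ E_θ then (s ∘ α, t ∘ α) ∈ E_{θ_M} where E_{θ_M} is the analogous relation on the C-set (M, M) with action α⟦β,γ⟧ = (α ∧ β) ∨ (¬α ∧ γ); concretely, there exists β with (β,T) ∈ θ such that β⟦s ∘ α, t ∘ α⟧ = β⟦t ∘ α, t ∘ α⟧. -/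
/-- If `(s, t) ∈ E_θ` then `(s ∘ α, t ∘ α) ∈ E_{θ_M}`: there exists `β` with `(β, T) ∈ θ`
such that `β⟦s∘α, t∘α⟧ = β⟦t∘α, t∘α⟧`, where `α⟦β,γ⟧ = (α∧β) ∨ (¬α∧γ)`. -/
theorem stmt13 {S M : Type*} (C : CMonoid S M) (θ : Cong C)
    (hproper : ¬ ∀ a b, θ.r a b)
    (hmax : ∀ θ' : Cong C, (∀ a b, θ.r a b → θ'.r a b) →
      (∀ a b, θ'.r a b → θ.r a b) ∨ (∀ a b, θ'.r a b))
    (s t : S) (α : M)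
    (h : ∃ β, θ.r β C.tt ∧ C.act β s t = C.act β t t) :
    ∃ β, θ.r β C.tt ∧
      C.or (C.and β (C.circ s α)) (C.and (C.neg β) (C.circ t α)) =
        C.or (C.and β (C.circ t α)) (C.and (C.neg β) (C.circ t α)) := by
  obtain ⟨β, hβ, heq⟩ := h
  exact ⟨β, hβ, by rw [← C.act_circ, ← C.act_circ, heq]⟩
end

section
/- Let (S_⊥, M) be a C-monoid, and θ a maximal proper congruence on M such that no two of T, F, U are θ-related and every element of M is θ-related to one of T, F, U. Define E_θ = { (s,t) : ∃β, (β,T) ∈ θ and β[s,t] = β[t,t] }, assume E_θ is an equivalence relation on S_⊥ compatible with the action as in Proposition 2.1 of the paper, and assume that for all s,t, (s,t) ∈ E_θ implies (s∘α, t∘α) ∈ θ for all α. Then the map φ_θ : S_⊥ → T_o((S_⊥/E_θ)) sending s to the map ψ^s: [t] ↦ [t·s] is a well-defined monoid homomorphism sending 1 to the identity map and ⊥ to the constant map with value [⊥]. -/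
/-- The map `φ_θ : S_⊥ → T_o(S_⊥ / E_θ)`, `s ↦ ([t] ↦ [t·s])`, is a well-defined
monoid homomorphism sending `1` to the identity and `⊥` to the constant map `[⊥]`. -/
theorem stmt15 {S M : Type*} (C : CMonoid S M) (θ : Cong C)
    (hproper : ¬ ∀ a b, θ.r a b)
    (hmax : ∀ θ' : Cong C, (∀ a b, θ.r a b → θ'.r a b) →
      (∀ a b, θ'.r a b → θ.r a b) ∨ (∀ a b, θ'.r a b))
    (hsep : ¬ θ.r C.tt C.ff ∧ ¬ θ.r C.tt C.uu ∧ ¬ θ.r C.ff C.uu)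
    (hcover : ∀ a, θ.r a C.tt ∨ θ.r a C.ff ∨ θ.r a C.uu)
    (E : S → S → Prop)
    (hEdef : ∀ s t, E s t ↔ ∃ β, θ.r β C.tt ∧ C.act β s t = C.act β t t)
    (hE : Equivalence E)
    (hact_compat : ∀ {s t u v : S} {α β : M},
      E s t → E u v → θ.r α β → E (C.act α s u) (C.act β t v))
    (hcirc : ∀ s t, E s t → ∀ α, θ.r (C.circ s α) (C.circ t α)) :
    ∃ φ : S → Quotient (Setoid.mk E hE) → Quotient (Setoid.mk E hE),
      (∀ s t, φ s (Quotient.mk (Setoid.mk E hE) t) =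
        Quotient.mk (Setoid.mk E hE) (C.mul t s)) ∧
      (∀ s, φ s (Quotient.mk (Setoid.mk E hE) C.bot) =
        Quotient.mk (Setoid.mk E hE) C.bot) ∧
      φ C.one = id ∧
      (φ C.bot = fun _ => Quotient.mk (Setoid.mk E hE) C.bot) ∧
      (∀ s t, φ (C.mul s t) = fun q => φ t (φ s q)) := by
  have hmul : ∀ (s : S) {u t : S}, E u t → E (C.mul u s) (C.mul t s) := by
    intro s u t h
    rw [hEdef] at h ⊢
    obtain ⟨β, hβ, hact⟩ := h
    exact ⟨β, hβ, by rw [← C.act_mul, ← C.act_mul, hact]⟩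
  refine ⟨fun s => Quotient.map (fun t => C.mul t s) (fun u t h => hmul s h), ?_, ?_, ?_, ?_, ?_⟩
  · intro s t; rfl
  · intro s
    show Quotient.mk _ (C.mul C.bot s) = _
    rw [C.bot_mul]
  · funext q
    induction q using Quotient.ind with
    | _ t => show Quotient.mk _ (C.mul t C.one) = _; rw [C.mul_one]; rfl
  · funext q
    induction q using Quotient.ind with
    | _ t => show Quotient.mk _ (C.mul t C.bot) = _; rw [C.mul_bot]
  · intro s t
    funext q
    induction q using Quotient.ind with
    | _ u =>
      show Quotient.mk _ (C.mul u (C.mul s t)) = Quotient.mk _ (C.mul (C.mul u s) t)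
      rw [C.mul_assoc]
end
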